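/- If M and N are distinct lattice points of S_n and 2M = X + Y for distinct lattice points X, Y of S_n, then M has some entry equal to 1, and one of X, Y contains strictly more entries equal to 2 than M does. -/
import Mathlib


/-- A lattice point of `S_n`: a symmetric nonnegative integer matrix with all row sums `2`. -/
def IsLatticePtSn {n : ℕ} (M : Matrix (Fin n) (Fin n) ℕ) : Prop :=
  M.IsSymm ∧ ∀ i, ∑ j, M i j = 2

/-- The number of entries of `M` equal to `2`. -/
def twosCount {n : ℕ} (M : Matrix (Fin n) (Fin n) ℕ) : ℕ :=
  (Finset.univ.filter (fun p : Fin n × Fin n => M p.1 p.2 = 2)).card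

/-- If `X ≠ Y` are lattice points of `S_n` and `M` is a lattice point with `2M = X + Y`,
then every `2`-entry of `M` is a `2`-entry of both `X` and `Y`, `M` has some entry equal
to `1`, and one of `X`, `Y` has strictly more entries equal to `2` than `M` does. -/
theorem midpoint_lattice_point (n : ℕ) (M X Y : Matrix (Fin n) (Fin n) ℕ)
    (hM : IsLatticePtSn M) (hX : IsLatticePtSn X) (hY : IsLatticePtSn Y)
    (hXY : X ≠ Y) (hmid : M + M = X + Y) :
    (∀ i j, M i j = 2 → X i j = 2 ∧ Y i j = 2) ∧
    (∃ i j, M i j = 1) ∧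
    (twosCount M < twosCount X ∨ twosCount M < twosCount Y) := by
  have bnd : ∀ (A : Matrix (Fin n) (Fin n) ℕ), IsLatticePtSn A → ∀ i j, A i j ≤ 2 := by
    intro A hA i j
    calc A i j ≤ ∑ k, A i k :=
          Finset.single_le_sum (fun k _ => Nat.zero_le _) (Finset.mem_univ j)
      _ = 2 := hA.2 i
  have bM := bnd M hM
  have bX := bnd X hX
  have bY := bnd Y hY
  have hsum : ∀ i j, M i j + M i j = X i j + Y i j := by
    intro i j
    have := congrFun (congrFun hmid i) j
    simpa using this
  have part1 : ∀ i j, M i j = 2 → X i j = 2 ∧ Y i j = 2 := by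
    intro i j h
    have h1 := hsum i j
    have h2 := bX i j
    have h3 := bY i j
    omega
  refine ⟨part1, ?_, ?_⟩
  · by_contra h
    push_neg at h
    apply hXY
    ext i j
    have h1 := hsum i j
    have h2 := bX i j
    have h3 := bY i j
    have h4 := bM i j
    have h5 := h i j
    omega
  · by_contra h
    push_neg at h
    obtain ⟨hx, hy⟩ := h
    set SM := Finset.univ.filter (fun p : Fin n × Fin n => M p.1 p.2 = 2) with hSM
    set SX := Finset.univ.filter (fun p : Fin n × Fin n => X p.1 p.2 = 2) with hSX
    set SY := Finset.univ.filter (fun p : Fin n × Fin n => Y p.1 p.2 = 2) with hSY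
    have hsubX : SM ⊆ SX := by
      intro p hp
      simp only [hSM, hSX, Finset.mem_filter, Finset.mem_univ, true_and] at hp ⊢
      exact (part1 p.1 p.2 hp).1
    have hsubY : SM ⊆ SY := by
      intro p hp
      simp only [hSM, hSY, Finset.mem_filter, Finset.mem_univ, true_and] at hp ⊢
      exact (part1 p.1 p.2 hp).2
    have hXeq : SM = SX := Finset.eq_of_subset_of_card_le hsubX hx
    have hYeq : SM = SY := Finset.eq_of_subset_of_card_le hsubY hy
    apply hXY
    ext i j
    have hXM : X i j = 2 → M i j = 2 := by
      intro h2
      have : (i, j) ∈ SX := by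
        simp [hSX, h2]
      rw [← hXeq] at this
      simpa [hSM] using this
    have hYM : Y i j = 2 → M i j = 2 := by
      intro h2
      have : (i, j) ∈ SY := by
        simp [hSY, h2]
      rw [← hYeq] at this
      simpa [hSM] using this
    have h1 := hsum i j
    have h2 := bX i j
    have h3 := bY i j
    have h4 := bM i j
    by_cases hm : M i j = 2
    · have := part1 i j hm
      omega
    · have : X i j ≠ 2 := fun hc => hm (hXM hc)
      have : Y i j ≠ 2 := fun hc => hm (hYM hc)
      omega
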